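/- Let A, B, C, d, D, E, F, c and a data point (x, u, x') be fixed, with F + Fᵀ positive definite and γ > 0 such that F + Fᵀ − γI is positive definite. Let λ* be the solution of LCP(F, Dx + Eu + c), and let l^pred = (1/2)‖Ax + Bu + Cλ* + d − x'‖². For ε > 0 define l_ε = inf over λ ≥ 0, φ ≥ 0 of [(1/2)‖Ax + Bu + Cλ + d − x'‖² + (1/ε)(λᵀφ + (1/(2γ))‖Dx + Eu + Fλ + c − φ‖²)]. Then l_ε converges to l^pred as ε → 0⁺ (limit along the filter of positive ε tending to 0). -/
import Mathlib

open Matrix Filter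

/-- `lam` solves the linear complementarity problem `LCP(F, q)`. -/
def IsLCPSol {n : ℕ} (F : Matrix (Fin n) (Fin n) ℝ) (q lam : Fin n → ℝ) : Prop :=
  (∀ i, 0 ≤ lam i) ∧ (∀ i, 0 ≤ (F.mulVec lam + q) i) ∧ lam ⬝ᵥ (F.mulVec lam + q) = 0

lemma dot_nonneg' {n : ℕ} {v w : Fin n → ℝ} (hv : ∀ i, 0 ≤ v i) (hw : ∀ i, 0 ≤ w i) :
    0 ≤ v ⬝ᵥ w :=
  Finset.sum_nonneg fun i _ => mul_nonneg (hv i) (hw i)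

lemma dot_self_nonneg' {n : ℕ} (v : Fin n → ℝ) : 0 ≤ v ⬝ᵥ v :=
  Finset.sum_nonneg fun i _ => mul_self_nonneg _

lemma young_dot {n : ℕ} (a : ℝ) (ha : 0 < a) (v w : Fin n → ℝ) :
    -((a/2) * (v ⬝ᵥ v)) - (1/(2*a)) * (w ⬝ᵥ w) ≤ v ⬝ᵥ w := by
  have h : (0:ℝ) ≤ ∑ i, (a/2 * (v i * v i) + v i * w i + 1/(2*a) * (w i * w i)) := by
    refine Finset.sum_nonneg fun i _ => ?_
    have e : a/2 * (v i * v i) + v i * w i + 1/(2*a) * (w i * w i)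
        = (a * v i + w i)^2 / (2*a) := by field_simp; ring
    rw [e]; positivity
  simp only [dotProduct, Finset.sum_add_distrib, ← Finset.mul_sum] at h ⊢
  linarith

lemma exists_mu {n : ℕ} (M : Matrix (Fin n) (Fin n) ℝ)
    (hM : ∀ v : Fin n → ℝ, v ≠ 0 → 0 < v ⬝ᵥ M.mulVec v) :
    ∃ μ : ℝ, 0 < μ ∧ ∀ v : Fin n → ℝ, μ * (v ⬝ᵥ v) ≤ v ⬝ᵥ M.mulVec v := by
  rcases Nat.eq_zero_or_pos n with hn | hn
  · subst hn
    exact ⟨1, one_pos, fun v => by simp [dotProduct]⟩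
  have hne : Nonempty (Fin n) := ⟨⟨0, hn⟩⟩
  have hcomp : IsCompact (Metric.sphere (0 : Fin n → ℝ) 1) := isCompact_sphere _ _
  have hfc : Continuous (fun v : Fin n → ℝ => v ⬝ᵥ M.mulVec v) := by
    simp only [dotProduct, Matrix.mulVec]
    continuity
  have hnes : (Metric.sphere (0 : Fin n → ℝ) 1).Nonempty := by
    exact NormedSpace.sphere_nonempty.mpr (by norm_num)
  obtain ⟨w0, hw0, hmin⟩ := hcomp.exists_isMinOn hnes hfc.continuousOn
  set μ' := w0 ⬝ᵥ M.mulVec w0 with hμ'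
  have hw0ne : w0 ≠ 0 := by
    intro h
    rw [Metric.mem_sphere, h] at hw0
    simp at hw0
  have hμ'pos : 0 < μ' := hM w0 hw0ne
  refine ⟨μ' / n, div_pos hμ'pos (by exact_mod_cast hn), fun v => ?_⟩
  rcases eq_or_ne v 0 with rfl | hv
  · simp
  · have ht : (0:ℝ) < ‖v‖ := norm_pos_iff.mpr hv
    set t := ‖v‖
    have hw : (t⁻¹ • v) ∈ Metric.sphere (0 : Fin n → ℝ) 1 := by
      have h1 : ‖t⁻¹ • v‖ = 1 := by
        rw [norm_smul, norm_inv, Real.norm_eq_abs, abs_of_pos ht]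
        exact inv_mul_cancel₀ ht.ne'
      simpa using mem_sphere_zero_iff_norm.mpr h1
    have hle : μ' ≤ (t⁻¹ • v) ⬝ᵥ M.mulVec (t⁻¹ • v) := hmin hw
    have hfs : (t⁻¹ • v) ⬝ᵥ M.mulVec (t⁻¹ • v) = t⁻¹ * (t⁻¹ * (v ⬝ᵥ M.mulVec v)) := by
      rw [Matrix.mulVec_smul, smul_dotProduct, dotProduct_smul]
      simp [smul_eq_mul]
    rw [hfs] at hle
    have hfv : μ' * t^2 ≤ v ⬝ᵥ M.mulVec v := by
      calc μ' * t^2 = (t*t) * μ' := by ring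
        _ ≤ (t*t) * (t⁻¹ * (t⁻¹ * (v ⬝ᵥ M.mulVec v))) := by
            exact mul_le_mul_of_nonneg_left hle (by positivity)
        _ = v ⬝ᵥ M.mulVec v := by field_simp
    have hvv : v ⬝ᵥ v ≤ n * t^2 := by
      have hco : ∀ i, v i * v i ≤ t^2 := fun i => by
        have habs : |v i| ≤ t := by simpa using norm_le_pi_norm v i
        nlinarith [abs_nonneg (v i), abs_mul_abs_self (v i)]
      calc v ⬝ᵥ v = ∑ i, v i * v i := rfl
        _ ≤ ∑ _i : Fin n, t^2 := Finset.sum_le_sum fun i _ => hco i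
        _ = n * t^2 := by simp [Finset.sum_const, mul_comm]
    rw [div_mul_eq_mul_div, div_le_iff₀ (by exact_mod_cast hn : (0:ℝ) < n)]
    calc μ' * (v ⬝ᵥ v) ≤ μ' * (n * t^2) := mul_le_mul_of_nonneg_left hvv hμ'pos.le
      _ = (μ' * t^2) * n := by ring
      _ ≤ (v ⬝ᵥ M.mulVec v) * n := by
          exact mul_le_mul_of_nonneg_right hfv (by exact_mod_cast hn.le)

set_option maxHeartbeats 1000000 in
/-- Lemma 5(b): the violation-based loss converges to the prediction-based loss
as `ε → 0⁺`. -/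
theorem violation_loss_tendsto_prediction_loss {m m' p n : ℕ}
    (A : Matrix (Fin m) (Fin m') ℝ) (B : Matrix (Fin m) (Fin p) ℝ)
    (C : Matrix (Fin m) (Fin n) ℝ) (d : Fin m → ℝ)
    (D : Matrix (Fin n) (Fin m') ℝ) (E : Matrix (Fin n) (Fin p) ℝ)
    (F : Matrix (Fin n) (Fin n) ℝ) (c : Fin n → ℝ)
    (x : Fin m' → ℝ) (u : Fin p → ℝ) (x' : Fin m → ℝ)
    (γ : ℝ) (hγ : 0 < γ)
    (hF : ∀ v : Fin n → ℝ, v ≠ 0 → 0 < v ⬝ᵥ (F + Fᵀ).mulVec v)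
    (hγF : ∀ v : Fin n → ℝ, v ≠ 0 →
      0 < v ⬝ᵥ (F + Fᵀ - γ • (1 : Matrix (Fin n) (Fin n) ℝ)).mulVec v)
    (lamStar : Fin n → ℝ) (hsol : IsLCPSol F (D.mulVec x + E.mulVec u + c) lamStar)
    (lpred : ℝ)
    (hlpred : lpred = (1 / 2) * ((A.mulVec x + B.mulVec u + C.mulVec lamStar + d - x') ⬝ᵥ
      (A.mulVec x + B.mulVec u + C.mulVec lamStar + d - x')))
    (l : ℝ → ℝ)
    (hl : ∀ ε : ℝ, 0 < ε → l ε =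
      sInf {y : ℝ | ∃ lam phi : Fin n → ℝ, (∀ i, 0 ≤ lam i) ∧ (∀ i, 0 ≤ phi i) ∧
        y = (1 / 2) * ((A.mulVec x + B.mulVec u + C.mulVec lam + d - x') ⬝ᵥ
            (A.mulVec x + B.mulVec u + C.mulVec lam + d - x')) +
          (1 / ε) * (lam ⬝ᵥ phi +
            (1 / (2 * γ)) * ((D.mulVec x + E.mulVec u + F.mulVec lam + c - phi) ⬝ᵥ
              (D.mulVec x + E.mulVec u + F.mulVec lam + c - phi)))}) :
    Tendsto l (nhdsWithin 0 (Set.Ioi 0)) (nhds lpred) := by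
  obtain ⟨μ, hμ, hμle⟩ := exists_mu _ hγF
  set vstar : Fin m → ℝ := A.mulVec x + B.mulVec u + C.mulVec lamStar + d - x' with hvstar
  set k : Fin n → ℝ := Cᵀ.mulVec vstar with hk
  set Kc : ℝ := (k ⬝ᵥ k) / (2*μ) with hKc
  have hKc0 : 0 ≤ Kc := div_nonneg (dot_self_nonneg' k) (by linarith)
  set rstar : Fin n → ℝ := F.mulVec lamStar + (D.mulVec x + E.mulVec u + c) with hrstar
  -- the witness value:
  have hmem : ∀ ε : ℝ, 0 < ε → lpred ∈
      {y : ℝ | ∃ lam phi : Fin n → ℝ, (∀ i, 0 ≤ lam i) ∧ (∀ i, 0 ≤ phi i) ∧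
        y = (1 / 2) * ((A.mulVec x + B.mulVec u + C.mulVec lam + d - x') ⬝ᵥ
            (A.mulVec x + B.mulVec u + C.mulVec lam + d - x')) +
          (1 / ε) * (lam ⬝ᵥ phi +
            (1 / (2 * γ)) * ((D.mulVec x + E.mulVec u + F.mulVec lam + c - phi) ⬝ᵥ
              (D.mulVec x + E.mulVec u + F.mulVec lam + c - phi)))} := by
    intro ε hε
    refine ⟨lamStar, rstar, hsol.1, hsol.2.1, ?_⟩
    have hres : D.mulVec x + E.mulVec u + F.mulVec lamStar + c - rstar = 0 := by
      rw [hrstar]; abel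
    have hz : lamStar ⬝ᵥ rstar = 0 := hsol.2.2
    rw [show A.mulVec x + B.mulVec u + C.mulVec lamStar + d - x' = vstar from hvstar.symm,
      hres, hz, hlpred]
    simp
  -- the lower bound:
  have hlow : ∀ ε : ℝ, 0 < ε → ∀ y ∈
      {y : ℝ | ∃ lam phi : Fin n → ℝ, (∀ i, 0 ≤ lam i) ∧ (∀ i, 0 ≤ phi i) ∧
        y = (1 / 2) * ((A.mulVec x + B.mulVec u + C.mulVec lam + d - x') ⬝ᵥ
            (A.mulVec x + B.mulVec u + C.mulVec lam + d - x')) +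
          (1 / ε) * (lam ⬝ᵥ phi +
            (1 / (2 * γ)) * ((D.mulVec x + E.mulVec u + F.mulVec lam + c - phi) ⬝ᵥ
              (D.mulVec x + E.mulVec u + F.mulVec lam + c - phi)))},
      lpred - Kc * ε ≤ y := by
    rintro ε hε y ⟨lam, phi, hlam, hphi, rfl⟩
    set δ : Fin n → ℝ := lam - lamStar with hδ
    set w : Fin n → ℝ := phi - (D.mulVec x + E.mulVec u + F.mulVec lam + c) with hw
    -- rewrite the prediction vector
    have hv : A.mulVec x + B.mulVec u + C.mulVec lam + d - x' = vstar + C.mulVec δ := by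
      rw [hδ, Matrix.mulVec_sub, hvstar]; abel
    -- residual equals -w
    have hres : D.mulVec x + E.mulVec u + F.mulVec lam + c - phi = -w := by
      rw [hw]; abel
    have hresdot : (D.mulVec x + E.mulVec u + F.mulVec lam + c - phi) ⬝ᵥ
        (D.mulVec x + E.mulVec u + F.mulVec lam + c - phi) = w ⬝ᵥ w := by
      rw [hres, neg_dotProduct, dotProduct_neg, neg_neg]
    -- key bilinear identity
    have key : lam ⬝ᵥ phi = lamStar ⬝ᵥ phi + δ ⬝ᵥ w + lam ⬝ᵥ rstar - lamStar ⬝ᵥ rstar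
        + δ ⬝ᵥ (F.mulVec δ) := by
      simp only [hδ, hw, hrstar, Matrix.mulVec_sub, dotProduct_sub, sub_dotProduct,
        dotProduct_add, add_dotProduct]
      ring
    have hnn1 : 0 ≤ lam ⬝ᵥ rstar := dot_nonneg' hlam hsol.2.1
    have hz : lamStar ⬝ᵥ rstar = 0 := hsol.2.2
    have hnn2 : 0 ≤ lamStar ⬝ᵥ phi := dot_nonneg' hsol.1 hphi
    have hyoung := young_dot γ hγ δ w
    have hFδ : δ ⬝ᵥ F.mulVec δ = (1/2) * (δ ⬝ᵥ (F + Fᵀ).mulVec δ) := by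
      rw [Matrix.add_mulVec, dotProduct_add]
      have hsym : δ ⬝ᵥ Fᵀ.mulVec δ = δ ⬝ᵥ F.mulVec δ := by
        rw [Matrix.dotProduct_mulVec, Matrix.vecMul_transpose, dotProduct_comm]
      rw [hsym]; ring
    have hμδ := hμle δ
    have hexp : δ ⬝ᵥ (F + Fᵀ - γ • (1 : Matrix (Fin n) (Fin n) ℝ)).mulVec δ
        = δ ⬝ᵥ (F + Fᵀ).mulVec δ - γ * (δ ⬝ᵥ δ) := by
      rw [Matrix.sub_mulVec, dotProduct_sub, Matrix.smul_mulVec, Matrix.one_mulVec,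
        dotProduct_smul, smul_eq_mul]
    rw [hexp] at hμδ
    -- penalty bound
    have hpen : (μ/2) * (δ ⬝ᵥ δ) ≤ lam ⬝ᵥ phi + (1/(2*γ)) * (w ⬝ᵥ w) := by
      linarith
    -- prediction term identity
    have hg : (1/2 : ℝ) * ((vstar + C.mulVec δ) ⬝ᵥ (vstar + C.mulVec δ))
        = lpred + k ⬝ᵥ δ + (1/2) * ((C.mulVec δ) ⬝ᵥ (C.mulVec δ)) := by
      have hkd : k ⬝ᵥ δ = vstar ⬝ᵥ C.mulVec δ := by
        rw [hk, Matrix.dotProduct_mulVec]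
        rw [show (vstar ᵥ* C) = Cᵀ.mulVec vstar by
          rw [← Matrix.transpose_transpose C, Matrix.vecMul_transpose,
            Matrix.transpose_transpose]]
      rw [hlpred, hkd, dotProduct_add, add_dotProduct, add_dotProduct,
        dotProduct_comm (C.mulVec δ) vstar]
      ring
    have hyk := young_dot (ε/μ) (div_pos hε hμ) k δ
    have e1 : ((ε/μ)/2) * (k ⬝ᵥ k) = Kc * ε := by
      rw [hKc]; field_simp
    have e2 : (1:ℝ)/(2*(ε/μ)) = (1/ε) * (μ/2) := by
      field_simp [hε.ne', hμ.ne']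
    rw [e1, e2, mul_assoc] at hyk
    have hpen' : (1/ε) * ((μ/2) * (δ ⬝ᵥ δ)) ≤
        (1/ε) * (lam ⬝ᵥ phi + (1/(2*γ)) * (w ⬝ᵥ w)) :=
      mul_le_mul_of_nonneg_left hpen (by positivity)
    have hCd : 0 ≤ (C.mulVec δ) ⬝ᵥ (C.mulVec δ) := dot_self_nonneg' _
    rw [hv, hresdot, hg]
    linarith
  -- squeeze
  have hub : ∀ ε : ℝ, 0 < ε → l ε ≤ lpred := fun ε hε => by
    rw [hl ε hε]
    exact csInf_le ⟨lpred - Kc * ε, fun y hy => hlow ε hε y hy⟩ (hmem ε hε)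
  have hlb : ∀ ε : ℝ, 0 < ε → lpred - Kc * ε ≤ l ε := fun ε hε => by
    rw [hl ε hε]
    exact le_csInf ⟨lpred, hmem ε hε⟩ (hlow ε hε)
  refine tendsto_of_tendsto_of_tendsto_of_le_of_le' (g := fun ε => lpred - Kc * ε)
    (h := fun _ => lpred) ?_ tendsto_const_nhds ?_ ?_
  · have hc : Tendsto (fun ε : ℝ => lpred - Kc * ε) (nhds 0) (nhds (lpred - Kc * 0)) :=
      (Continuous.tendsto (by continuity) 0)
    simpa using hc.mono_left nhdsWithin_le_nhds
  · filter_upwards [self_mem_nhdsWithin] with ε hε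
    exact hlb ε hε
  · filter_upwards [self_mem_nhdsWithin] with ε hε
    exact hub ε hε
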